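/- There exists N ∈ ℕ such that for every integer i ≥ N, (4/(3·2^i)) · ∫_𝔻 ( ∑_{k=2^i}^{2^{i+1}-1} |μ_k(z)|² )² dA(z) ≥ 2^{-30}. -/

import Mathlib

/-!
With n = 2^i, restrict the integral to the annulus 1/(4n) ≤ 1 - |z|² ≤ 3/(8n), of Euclidean area
π/(8n). There every |μ_k|², n ≤ k < 2n, is at least 1/(8192 π n): the factor (1 - |z|²)⁴ is of size
n⁻⁴, the normalisation of size n³, and |z|^(2k-2) ≥ 1/4 by Bernoulli's inequality. Hence the sum of
the n terms is at least 1/(8192 π), while ρ ≥ 256 n²/9, so the integral is at least a constant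
times n, which the prefactor 4/(3n) turns into the absolute constant 1/(14155776 π) > 2⁻³⁰.
-/

open MeasureTheory Complex

/-- The hyperbolic metric density `ρ(z) = 4/(1-|z|²)²` on the unit disk. -/
noncomputable def rho (z : ℂ) : ℝ := 4 / (1 - ‖z‖ ^ 2) ^ 2

/-- The tangent basis elements
`μ_k(z) = ((1-|z|²)²/4) · √((2(k+1)³-2(k+1))/π) · conj(z)^(k-1)`, for `k ≥ 1`. -/
noncomputable def mu (k : ℕ) (z : ℂ) : ℂ :=
  ((((1 - ‖z‖ ^ 2) ^ 2 / 4) *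
      Real.sqrt ((2 * ((k : ℝ) + 1) ^ 3 - 2 * ((k : ℝ) + 1)) / Real.pi) : ℝ) : ℂ) *
    (starRingEnd ℂ z) ^ (k - 1)

open Real Set

lemma mul_measureReal_le_setIntegral {α : Type*} [MeasurableSpace α] {μ : Measure α}
    {f : α → ℝ} {s t : Set α} {c : ℝ} (hf : IntegrableOn f s μ) (hf0 : 0 ≤ᵐ[μ.restrict s] f)
    (hts : t ⊆ s) (ht : MeasurableSet t) (hμt : μ t ≠ ⊤) (hc : ∀ x ∈ t, c ≤ f x) :
    c * μ.real t ≤ ∫ x in s, f x ∂μ :=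
  (setIntegral_ge_of_const_le_real ht hμt hc (hf.mono_set hts)).trans
    (setIntegral_mono_set hf hf0 hts.eventuallyLE)

lemma Complex.volume_real_setOf_norm_sq_mem_Icc {a b : ℝ} (ha : 0 ≤ a) (hab : a ≤ b) :
    volume.real {z : ℂ | ‖z‖ ^ 2 ∈ Icc a b} = π * (b - a) := by
  have hb : 0 ≤ b := ha.trans hab
  have hA : {z : ℂ | ‖z‖ ^ 2 ∈ Icc a b} = Metric.closedBall 0 √b \ Metric.ball 0 √a := by
    ext z
    simp only [mem_ofPred_eq, mem_Icc, mem_sdiff, Metric.mem_closedBall, Metric.mem_ball,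
      dist_zero_right, not_lt, Real.le_sqrt (norm_nonneg z) hb,
      Real.sqrt_le_left (norm_nonneg z)]
    tauto
  have hball : volume.real (Metric.ball (0 : ℂ) √a) = π * a := by
    simp [measureReal_def, Complex.volume_ball, ENNReal.toReal_ofReal (Real.sqrt_nonneg _),
      Real.sq_sqrt ha, mul_comm]
  have hclosedBall : volume.real (Metric.closedBall (0 : ℂ) √b) = π * b := by
    simp [measureReal_def, Complex.volume_closedBall, ENNReal.toReal_ofReal (Real.sqrt_nonneg _),
      Real.sq_sqrt hb, mul_comm]
  rw [hA, measureReal_sdiff (Metric.ball_subset_closedBall.trans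
      (Metric.closedBall_subset_closedBall (Real.sqrt_le_sqrt hab))) measurableSet_ball
      measure_closedBall_lt_top.ne,
    hball, hclosedBall]
  ring

lemma one_sub_mul_le_pow {x : ℝ} (hx0 : 0 ≤ x) (hx1 : x ≤ 1) {m M : ℕ} (hmM : m ≤ M) :
    1 - M * (1 - x) ≤ x ^ m :=
  calc 1 - M * (1 - x) = 1 + M * (x - 1) := by ring
    _ ≤ (1 + (x - 1)) ^ M := one_add_mul_le_pow (by linarith) M
    _ = x ^ M := by ring
    _ ≤ x ^ m := pow_le_pow_of_le_one hx0 hx1 hmM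

noncomputable def muCoeff (k : ℕ) : ℝ := (2 * ((k : ℝ) + 1) ^ 3 - 2 * ((k : ℝ) + 1)) / π

lemma muCoeff_nonneg (k : ℕ) : 0 ≤ muCoeff k := by
  unfold muCoeff
  rw [show 2 * ((k : ℝ) + 1) ^ 3 - 2 * ((k : ℝ) + 1) = 2 * k * (k + 1) * (k + 2) by ring]
  positivity

lemma two_mul_pow_three_div_pi_le_muCoeff {x : ℝ} {k : ℕ} (hx : 0 ≤ x) (hxk : x ≤ k) :
    2 * x ^ 3 / π ≤ muCoeff k := by
  unfold muCoeff
  gcongr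
  nlinarith [pow_le_pow_left₀ hx hxk 3]

lemma norm_mu_sq (k : ℕ) (z : ℂ) :
    ‖mu k z‖ ^ 2 = (1 - ‖z‖ ^ 2) ^ 4 / 16 * muCoeff k * (‖z‖ ^ 2) ^ (k - 1) := by
  have hc : 0 ≤ (2 * ((k : ℝ) + 1) ^ 3 - 2 * ((k : ℝ) + 1)) / π := muCoeff_nonneg k
  rw [mu, norm_mul, norm_pow, RCLike.norm_conj, Complex.norm_real, Real.norm_eq_abs,
    abs_of_nonneg (by positivity), mul_pow, mul_pow, Real.sq_sqrt hc, ← pow_mul, ← pow_mul,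
    muCoeff]
  ring

lemma rho_nonneg (z : ℂ) : 0 ≤ rho z := by
  unfold rho
  positivity

lemma four_div_sq_le_rho {z : ℂ} {δ : ℝ} (hz : 0 < 1 - ‖z‖ ^ 2) (hδ : 1 - ‖z‖ ^ 2 ≤ δ) :
    4 / δ ^ 2 ≤ rho z := by
  unfold rho
  gcongr

lemma continuous_sq_sum_norm_mu_sq_mul_rho (s : Finset ℕ) :
    Continuous fun z => (∑ k ∈ s, ‖mu k z‖ ^ 2) ^ 2 * rho z := by
  have h : ∀ z : ℂ, (∑ k ∈ s, ‖mu k z‖ ^ 2) ^ 2 * rho z =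
      (1 - ‖z‖ ^ 2) ^ 6 * (∑ k ∈ s, muCoeff k * (‖z‖ ^ 2) ^ (k - 1)) ^ 2 / 64 := by
    intro z
    -- the factor `(1 - ‖z‖²)⁸` cancels the pole of `rho`; on the unit circle both sides are `0`
    simp_rw [norm_mu_sq, mul_assoc, ← Finset.mul_sum, rho]
    rcases eq_or_ne (1 - ‖z‖ ^ 2) 0 with h | h
    · simp [h]
    · field_simp
      ring
  simp_rw [h]
  fun_prop

lemma inv_le_norm_mu_sq {n k : ℕ} (hn : 0 < n) (hnk : n ≤ k) (hk : k ≤ 2 * n) {z : ℂ}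
    (hlo : 1 / (4 * n) ≤ 1 - ‖z‖ ^ 2) (hhi : 1 - ‖z‖ ^ 2 ≤ 3 / (8 * n)) :
    1 / (8192 * π * n) ≤ ‖mu k z‖ ^ 2 := by
  have hn' : (0 : ℝ) < n := Nat.cast_pos.mpr hn
  have hcoeff : 2 * (n : ℝ) ^ 3 / π ≤ muCoeff k :=
    two_mul_pow_three_div_pi_le_muCoeff hn'.le (Nat.cast_le.mpr hnk)
  have hpow : 1 / 4 ≤ (‖z‖ ^ 2) ^ (k - 1) := by
    have hz1 : ‖z‖ ^ 2 ≤ 1 := by linarith [show (0 : ℝ) < 1 / (4 * n) by positivity]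
    have h := one_sub_mul_le_pow (sq_nonneg ‖z‖) hz1 (by omega : k - 1 ≤ 2 * n)
    have h34 : ((2 * n : ℕ) : ℝ) * (1 - ‖z‖ ^ 2) ≤ 3 / 4 := by
      calc ((2 * n : ℕ) : ℝ) * (1 - ‖z‖ ^ 2) ≤ 2 * n * (3 / (8 * n)) := by push_cast; gcongr
        _ = 3 / 4 := by field_simp; ring
    linarith
  rw [norm_mu_sq]
  calc 1 / (8192 * π * n) = (1 / (4 * n)) ^ 4 / 16 * (2 * (n : ℝ) ^ 3 / π) * (1 / 4) := by
        field_simp; ring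
    _ ≤ _ := by
        gcongr
        exact mul_nonneg (by positivity) (muCoeff_nonneg k)

lemma inv_le_sum_norm_mu_sq {n : ℕ} (hn : 0 < n) {z : ℂ}
    (hlo : 1 / (4 * n) ≤ 1 - ‖z‖ ^ 2) (hhi : 1 - ‖z‖ ^ 2 ≤ 3 / (8 * n)) :
    1 / (8192 * π) ≤ ∑ k ∈ Finset.Icc n (2 * n - 1), ‖mu k z‖ ^ 2 := by
  have hterm : ∀ k ∈ Finset.Icc n (2 * n - 1), 1 / (8192 * π * n) ≤ ‖mu k z‖ ^ 2 := by
    intro k hk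
    rw [Finset.mem_Icc] at hk
    exact inv_le_norm_mu_sq hn hk.1 (by omega) hlo hhi
  have hcard : (Finset.Icc n (2 * n - 1)).card = n := by
    rw [Nat.card_Icc]
    omega
  calc 1 / (8192 * π) = (Finset.Icc n (2 * n - 1)).card • (1 / (8192 * π * n)) := by
        rw [hcard, nsmul_eq_mul]
        field_simp
    _ ≤ _ := Finset.card_nsmul_le_sum _ _ _ hterm

lemma setOf_norm_sq_mem_Icc_subset_ball {a b : ℝ} (hb : b < 1) :
    {z : ℂ | ‖z‖ ^ 2 ∈ Icc a b} ⊆ Metric.ball 0 1 := by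
  intro z hz
  simpa using (sq_lt_one_iff₀ (norm_nonneg z)).1 (hz.2.trans_lt hb)

lemma le_sq_sum_norm_mu_sq_mul_rho {n : ℕ} (hn : 0 < n) {z : ℂ}
    (hlo : 1 / (4 * n) ≤ 1 - ‖z‖ ^ 2) (hhi : 1 - ‖z‖ ^ 2 ≤ 3 / (8 * n)) :
    (1 / (8192 * π)) ^ 2 * (4 / (3 / (8 * n)) ^ 2) ≤
      (∑ k ∈ Finset.Icc n (2 * n - 1), ‖mu k z‖ ^ 2) ^ 2 * rho z := by
  have hz : 0 < 1 - ‖z‖ ^ 2 := lt_of_lt_of_le (by positivity) hlo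
  gcongr
  · exact inv_le_sum_norm_mu_sq hn hlo hhi
  · exact four_div_sq_le_rho hz hhi

lemma le_integral_sq_sum_norm_mu_sq_mul_rho {n : ℕ} (hn : 0 < n) :
    (1 / (8192 * π)) ^ 2 * (4 / (3 / (8 * n)) ^ 2) * (π * (1 / (8 * n))) ≤
      ∫ z in Metric.ball (0 : ℂ) 1, (∑ k ∈ Finset.Icc n (2 * n - 1), ‖mu k z‖ ^ 2) ^ 2 * rho z := by
  have h38 : 3 / (8 * (n : ℝ)) ≤ 3 / 8 := by
    gcongr
    linarith [Nat.one_le_cast (α := ℝ) |>.mpr hn]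
  have hwidth : 1 - 1 / (4 * n) - (1 - 3 / (8 * (n : ℝ))) = 1 / (8 * n) := by
    field_simp
    ring
  set A : Set ℂ := {z | ‖z‖ ^ 2 ∈ Icc (1 - 3 / (8 * (n : ℝ))) (1 - 1 / (4 * n))}
  have hA_sub : A ⊆ Metric.ball 0 1 :=
    setOf_norm_sq_mem_Icc_subset_ball (by linarith [show (0 : ℝ) < 1 / (4 * n) by positivity])
  have hA_vol : volume.real A = π * (1 / (8 * n)) := by
    rw [Complex.volume_real_setOf_norm_sq_mem_Icc (by linarith)
      (by linarith [show (0 : ℝ) < 1 / (8 * n) by positivity]), hwidth]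
  rw [← hA_vol]
  exact mul_measureReal_le_setIntegral
    ((continuous_sq_sum_norm_mu_sq_mul_rho _).continuousOn.integrableOn_compact
      (isCompact_closedBall 0 1) |>.mono_set Metric.ball_subset_closedBall)
    (ae_of_all _ fun z => mul_nonneg (sq_nonneg _) (rho_nonneg z)) hA_sub
    ((by fun_prop : Measurable fun z : ℂ => ‖z‖ ^ 2) measurableSet_Icc)
    (measure_ne_top_of_subset hA_sub measure_ball_lt_top.ne)
    fun z hz => le_sq_sum_norm_mu_sq_mul_rho hn (by linarith [hz.2]) (by linarith [hz.1])

/-- Proposition 5.4 (analytic content): for all sufficiently large `i`,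
`(4/(3·2^i)) ∫_𝔻 (∑_{k=2^i}^{2^{i+1}-1} |μ_k(z)|²)² dA(z) ≥ 2^{-30}`. -/
theorem curvature_lower_bound_on_Ai :
    ∃ N : ℕ, ∀ i : ℕ, N ≤ i →
      (4 / (3 * 2 ^ i)) *
        ∫ z in Metric.ball (0 : ℂ) 1,
          (∑ k ∈ Finset.Icc (2 ^ i) (2 ^ (i + 1) - 1), ‖mu k z‖ ^ 2) ^ 2 * rho z ≥
      (1 : ℝ) / 2 ^ 30 := by
  refine ⟨0, fun i _ => ?_⟩
  set n := 2 ^ i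
  have hn : 0 < n := by positivity
  rw [show (2 : ℝ) ^ i = n by simp [n], show 2 ^ (i + 1) - 1 = 2 * n - 1 by rw [pow_succ, mul_comm]]
  calc (1 : ℝ) / 2 ^ 30 ≤ 1 / (14155776 * π) := by
        gcongr
        linarith [pi_le_four]
    _ = 4 / (3 * n) * ((1 / (8192 * π)) ^ 2 * (4 / (3 / (8 * n)) ^ 2) * (π * (1 / (8 * n)))) := by
        field_simp
        ring
    _ ≤ _ := by gcongr; exact le_integral_sq_sum_norm_mu_sq_mul_rho hn
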